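/- arXiv:math/0201088 — 4 statements merged into one kernel-verified Lean document; each statement's English description precedes it below -/
import Mathlib

section
/- For a bounded domain D in ℂⁿ and a point z₀ ∈ ∂D, define L(z₀) as the set of vectors X ∈ ℂⁿ such that there exists ε > 0 with z₀ + λX ∈ ∂D for all complex λ with |λ| ≤ ε. If D is convex, then L(z₀) is a complex linear subspace of ℂⁿ. -/
/-!
Stability under complex scaling is just a rescaling of the disc radius and needs nothing of `D`.
For a sum, `z₀ + λ(X + Y)` is the midpoint of `z₀ + 2λX` and `z₀ + 2λY`, so it lies in the
closure of the convex set `D`; it cannot lie in the interior, since otherwise the midpoint `z₀` of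
`z₀ + λ(X + Y)` and `z₀ - λ(X + Y)` would be interior as well.
-/

section RealConvex

variable {E : Type*} [NormedAddCommGroup E] [NormedSpace ℝ E] {D : Set E} {z v : E}

theorem Convex.add_notMem_interior_of_sub_mem_closure (hD : Convex ℝ D) (hz : z ∉ interior D)
    (hv : z - v ∈ closure D) : z + v ∉ interior D := by
  intro hv'
  have hmid := hD.combo_interior_closure_mem_interior hv' hv
    (by norm_num : (0 : ℝ) < 1 / 2) (by norm_num : (0 : ℝ) ≤ 1 / 2) (by norm_num)
  have heq : (1 / 2 : ℝ) • (z + v) + (1 / 2 : ℝ) • (z - v) = z := by module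
  exact hz (heq ▸ hmid)

theorem Convex.add_mem_frontier_of_mem_closure (hD : Convex ℝ D) (hz : z ∉ interior D)
    (hadd : z + v ∈ closure D) (hsub : z - v ∈ closure D) : z + v ∈ frontier D :=
  ⟨hadd, hD.add_notMem_interior_of_sub_mem_closure hz hsub⟩

end RealConvex

section FrontierDiscDirections

variable {E : Type*} [NormedAddCommGroup E] [NormedSpace ℂ E] {D : Set E} {z₀ : E}

/-- The set `L(z₀)`. -/
def frontierDiscDirections (D : Set E) (z₀ : E) : Set E :=
  {X | ∃ ε > (0 : ℝ), ∀ l : ℂ, ‖l‖ ≤ ε → z₀ + l • X ∈ frontier D}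

theorem zero_mem_frontierDiscDirections (hz₀ : z₀ ∈ frontier D) :
    (0 : E) ∈ frontierDiscDirections D z₀ :=
  ⟨1, one_pos, fun l _ => by simpa using hz₀⟩

theorem smul_mem_frontierDiscDirections (c : ℂ) {X : E} (hX : X ∈ frontierDiscDirections D z₀) :
    c • X ∈ frontierDiscDirections D z₀ := by
  obtain ⟨ε, hε, hdisc⟩ := hX
  have hc : 0 < ‖c‖ + 1 := by positivity
  refine ⟨ε / (‖c‖ + 1), by positivity, fun l hl => ?_⟩
  have hlc : ‖l * c‖ ≤ ε := by
    rw [le_div_iff₀ hc] at hl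
    rw [norm_mul]
    nlinarith [norm_nonneg l]
  simpa [smul_smul] using hdisc (l * c) hlc

theorem Convex.add_mem_frontierDiscDirections (hD : Convex ℝ D) (hz₀ : z₀ ∈ frontier D) {X Y : E}
    (hX : X ∈ frontierDiscDirections D z₀) (hY : Y ∈ frontierDiscDirections D z₀) :
    X + Y ∈ frontierDiscDirections D z₀ := by
  obtain ⟨ε₁, hε₁, hdiscX⟩ := hX
  obtain ⟨ε₂, hε₂, hdiscY⟩ := hY
  refine ⟨min ε₁ ε₂ / 2, by positivity, fun l hl => ?_⟩
  have hclosure : ∀ m : ℂ, ‖m‖ ≤ ‖l‖ → z₀ + m • (X + Y) ∈ closure D := by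
    intro m hm
    have h2m : ‖2 * m‖ ≤ min ε₁ ε₂ := by
      rw [norm_mul, Complex.norm_ofNat]
      linarith
    have hmX := frontier_subset_closure (hdiscX _ (h2m.trans (min_le_left _ _)))
    have hmY := frontier_subset_closure (hdiscY _ (h2m.trans (min_le_right _ _)))
    have hmid := hD.closure hmX hmY
      (by norm_num : (0 : ℝ) ≤ 1 / 2) (by norm_num : (0 : ℝ) ≤ 1 / 2) (by norm_num)
    have heq : (1 / 2 : ℝ) • (z₀ + (2 * m) • X) + (1 / 2 : ℝ) • (z₀ + (2 * m) • Y)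
        = z₀ + m • (X + Y) := by module
    exact heq ▸ hmid
  have hsub : z₀ - l • (X + Y) ∈ closure D := by
    simpa only [neg_smul, ← sub_eq_add_neg] using hclosure (-l) (norm_neg l).le
  exact hD.add_mem_frontier_of_mem_closure hz₀.2 (hclosure l le_rfl) hsub

def Convex.frontierDiscDirectionsSubmodule (hD : Convex ℝ D) (hz₀ : z₀ ∈ frontier D) :
    Submodule ℂ E where
  carrier := frontierDiscDirections D z₀
  zero_mem' := zero_mem_frontierDiscDirections hz₀
  add_mem' := hD.add_mem_frontierDiscDirections hz₀
  smul_mem' := smul_mem_frontierDiscDirections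

end FrontierDiscDirections

theorem stmt0_general {n : ℕ} (D : Set (EuclideanSpace ℂ (Fin n)))
    (hDc : Convex ℝ D)
    (z₀ : EuclideanSpace ℂ (Fin n)) (hz₀ : z₀ ∈ frontier D) :
    ∃ S : Submodule ℂ (EuclideanSpace ℂ (Fin n)),
      (S : Set (EuclideanSpace ℂ (Fin n))) =
        {X | ∃ ε > (0 : ℝ), ∀ l : ℂ, ‖l‖ ≤ ε → z₀ + l • X ∈ frontier D} :=
  ⟨hDc.frontierDiscDirectionsSubmodule hz₀, rfl⟩

/-- For a bounded convex domain `D ⊆ ℂⁿ` and `z₀ ∈ ∂D`, the set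
`L(z₀) = {X | ∃ ε > 0, ∀ λ, ‖λ‖ ≤ ε → z₀ + λ • X ∈ ∂D}` is a complex linear subspace. -/
theorem stmt0 {n : ℕ} (D : Set (EuclideanSpace ℂ (Fin n)))
    (hDo : IsOpen D) (hDne : D.Nonempty) (hDc : Convex ℝ D)
    (hDb : Bornology.IsBounded D)
    (z₀ : EuclideanSpace ℂ (Fin n)) (hz₀ : z₀ ∈ frontier D) :
    ∃ S : Submodule ℂ (EuclideanSpace ℂ (Fin n)),
      (S : Set (EuclideanSpace ℂ (Fin n))) =
        {X | ∃ ε > (0 : ℝ), ∀ l : ℂ, ‖l‖ ≤ ε → z₀ + l • X ∈ frontier D} :=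
  stmt0_general D hDc z₀ hz₀
end

section
/- Let D ⊂ ℂⁿ be a convex open set, let L = {z : z₁ = ⋯ = z_k = 0} and suppose {0'} × Δ''_c ⊂ ∂D, where Δ''_c ⊂ ℂ^{n-k} is the polydisc of radius c centered at 0. If α > 1 and E_α := {z ∈ ℂᵏ × {0} : αz ∈ D ∩ (ℂᵏ × {0})}, then F_α × Δ''_ε ⊂ D where ε = c(1 − 1/α) and F_α is the projection of E_α to ℂᵏ. -/
open Metric

/-!
Write `(z', w) = α⁻¹ • (α • z', 0) + (1 - α⁻¹) • (0, (1 - α⁻¹)⁻¹ • w)`. The first point lies in `D`,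
and the second lies in `{0} × Δ''_c ⊆ ∂D ⊆ closure D` as soon as `w ∈ Δ''_ε`. A convex open set contains
every point of the half-open segment from one of its points towards a point of its closure.
-/

section ConvexProd

variable {E F : Type*} [AddCommGroup E] [Module ℝ E] [TopologicalSpace E]
  [IsTopologicalAddGroup E] [ContinuousSMul ℝ E]
  [AddCommGroup F] [Module ℝ F] [TopologicalSpace F]
  [IsTopologicalAddGroup F] [ContinuousSMul ℝ F]

theorem Convex.mk_smul_mem_of_isOpen {D : Set (E × F)} (hDo : IsOpen D) (hDc : Convex ℝ D)
    {α : ℝ} (hα : 1 < α) {x : E} {y : F} (hx : (α • x, 0) ∈ D) (hy : (0, y) ∈ closure D) :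
    (x, (1 - α⁻¹) • y) ∈ D := by
  have hα0 : 0 < α := one_pos.trans hα
  have hmem := hDc.combo_interior_closure_mem_interior (hDo.interior_eq.symm ▸ hx) hy
    (inv_pos.mpr hα0) (sub_nonneg.mpr (inv_le_one_of_one_le₀ hα.le)) (add_sub_cancel _ _)
  rw [hDo.interior_eq, Prod.smul_mk, Prod.smul_mk, Prod.mk_add_mk, smul_zero, smul_zero,
    add_zero, zero_add, smul_smul, inv_mul_cancel₀ hα0.ne', one_smul] at hmem
  exact hmem

end ConvexProd

theorem EuclideanSpace.norm_inv_smul_apply_lt {ι : Type*} {w : EuclideanSpace ℂ ι} {c t : ℝ}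
    (ht : 0 < t) (hw : ∀ j, ‖w j‖ < c * t) (j : ι) : ‖(t⁻¹ • w) j‖ < c := by
  rw [PiLp.smul_apply, norm_smul, Real.norm_of_nonneg (inv_nonneg.mpr ht.le),
    inv_mul_lt_iff₀ ht, mul_comm]
  exact hw j

theorem stmt2_general {k m : ℕ}
    (D : Set (EuclideanSpace ℂ (Fin k) × EuclideanSpace ℂ (Fin m)))
    (hDo : IsOpen D) (hDc : Convex ℝ D)
    (c : ℝ)
    (hbdry : ∀ w : EuclideanSpace ℂ (Fin m), (∀ j, ‖w j‖ < c) →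
      ((0 : EuclideanSpace ℂ (Fin k)), w) ∈ frontier D)
    (α : ℝ) (hα : 1 < α) :
    ∀ z' : EuclideanSpace ℂ (Fin k), ((α : ℂ) • z', (0 : EuclideanSpace ℂ (Fin m))) ∈ D →
      ∀ w : EuclideanSpace ℂ (Fin m), (∀ j, ‖w j‖ < c * (1 - 1 / α)) →
        (z', w) ∈ D := by
  intro z' hz' w hw
  have ht : 0 < 1 - α⁻¹ := sub_pos.mpr (inv_lt_one_of_one_lt₀ hα)
  rw [one_div] at hw
  have hy : (0, (1 - α⁻¹)⁻¹ • w) ∈ closure D :=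
    frontier_subset_closure (hbdry _ (EuclideanSpace.norm_inv_smul_apply_lt ht hw))
  have h := hDc.mk_smul_mem_of_isOpen hDo hα (Complex.coe_smul α z' ▸ hz') hy
  rwa [smul_smul, mul_inv_cancel₀ ht.ne', one_smul] at h

/-- If the convex open set `D ⊆ ℂᵏ × ℂᵐ` has `{0} × Δ''_c` in its boundary, `α > 1`,
and `F_α = {z' | (α z', 0) ∈ D}`, then `F_α × Δ''_ε ⊆ D` with `ε = c (1 - 1/α)`. -/
theorem stmt2 {k m : ℕ}
    (D : Set (EuclideanSpace ℂ (Fin k) × EuclideanSpace ℂ (Fin m)))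
    (hDo : IsOpen D) (hDc : Convex ℝ D)
    (c : ℝ) (hc : 0 < c)
    (hbdry : ∀ w : EuclideanSpace ℂ (Fin m), (∀ j, ‖w j‖ < c) →
      ((0 : EuclideanSpace ℂ (Fin k)), w) ∈ frontier D)
    (α : ℝ) (hα : 1 < α) :
    ∀ z' : EuclideanSpace ℂ (Fin k), ((α : ℂ) • z', (0 : EuclideanSpace ℂ (Fin m))) ∈ D →
      ∀ w : EuclideanSpace ℂ (Fin m), (∀ j, ‖w j‖ < c * (1 - 1 / α)) →
        (z', w) ∈ D :=
  stmt2_general D hDo hDc c hbdry α hα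
end

section
/- Let D ⊂ ℂⁿ be a bounded convex domain and z₀ ∈ ∂D with L(z₀) = {0}. Then there is no nonconstant analytic curve in the closure of D passing through z₀; i.e., if φ : 𝔻 → closure(D) is holomorphic with φ(0) = z₀, then φ is constant. -/
/-!
We shrink a complex subspace `W` containing every `φ λ - z₀`, starting from the whole space.
While `W ≠ 0`, the point `z₀` cannot be interior to the slice `(z₀ + W) ∩ closure D` relative
to `z₀ + W`: otherwise a small disc `z₀ + 𝔻 • X` with `X ∈ W \ {0}` would lie in `closure D`,
and, being symmetric about `z₀ ∉ D`, it would avoid `D` by convexity, i.e. `X ∈ L(z₀)`.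
A real functional `f` supporting the slice at `z₀`, complexified to `G` with `Re G = f`, makes
`G (φ - z₀)` a holomorphic function with nonpositive real part vanishing at `0`; by the open
mapping theorem it vanishes identically, so `φ - z₀` takes values in the strictly smaller
subspace `W ⊓ ker G`.
-/

open Metric Set

theorem DifferentiableOn.eq_zero_of_re_nonpos {U : Set ℂ} {h : ℂ → ℂ} {c : ℂ}
    (hd : DifferentiableOn ℂ h U) (hU : IsOpen U) (hUc : IsPreconnected U) (hc : c ∈ U)
    (hc0 : h c = 0) (hre : ∀ z ∈ U, (h z).re ≤ 0) : ∀ z ∈ U, h z = 0 := by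
  rcases (hd.analyticOnNhd hU).is_constant_or_isOpen hUc with ⟨w, hw⟩ | hopen
  · intro z hz
    rw [hw z hz, ← hw c hc, hc0]
  · exfalso
    have hsub : h '' U ⊆ {w : ℂ | w.re ≤ 0} := by
      rintro _ ⟨z, hz, rfl⟩
      exact hre z hz
    have : (0 : ℂ) ∈ interior {w : ℂ | w.re ≤ 0} :=
      interior_maximal hsub (hopen U subset_rfl hU) ⟨c, hc, hc0⟩
    simp at this

theorem Convex.exists_forall_le_of_notMem_interior {V : Type*} [NormedAddCommGroup V]
    [NormedSpace ℝ V] [FiniteDimensional ℝ V] {C : Set V} {x : V} (hC : Convex ℝ C)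
    (hx : x ∈ C) (hxi : x ∉ interior C) :
    ∃ f : StrongDual ℝ V, f ≠ 0 ∧ ∀ a ∈ C, f a ≤ f x := by
  by_cases hint : (interior C).Nonempty
  · exact geometric_hahn_banach_of_nonempty_interior_point hC hxi hint
  have hspan : vectorSpan ℝ C < ⊤ := by
    rwa [lt_top_iff_ne_top, Ne,
      ← AffineSubspace.affineSpan_eq_top_iff_vectorSpan_eq_top_of_nonempty ℝ V V ⟨x, hx⟩,
      ← hC.interior_nonempty_iff_affineSpan_eq_top]
  obtain ⟨g, hg, hker⟩ := (vectorSpan ℝ C).exists_le_ker_of_lt_top hspan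
  refine ⟨LinearMap.toContinuousLinearMap g, by simpa using hg, fun a ha => ?_⟩
  have hga : g (a - x) = 0 := hker (vsub_mem_vectorSpan ℝ ha hx)
  exact (sub_eq_zero.1 ((map_sub g a x).symm.trans hga)).le

theorem Convex.add_notMem_interior_of_sub_mem_closure_s10 {V : Type*} [AddCommGroup V] [Module ℝ V]
    [TopologicalSpace V] [IsTopologicalAddGroup V] [ContinuousSMul ℝ V] {D : Set V} {x v : V}
    (hD : Convex ℝ D) (hx : x ∉ interior D) (hv : x - v ∈ closure D) : x + v ∉ interior D := by
  intro hxv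
  apply hx
  convert hD.combo_interior_closure_mem_interior hxv hv (half_pos one_pos) (half_pos one_pos).le
    (add_halves 1) using 1
  module

section

variable {E : Type*} [NormedAddCommGroup E] [NormedSpace ℂ E]

theorem exists_lt_forall_sub_mem_of_zero_notMem_interior [FiniteDimensional ℂ E] {K : Set E}
    (hK : Convex ℝ K) {φ : ℂ → E} (hφ : DifferentiableOn ℂ φ (ball 0 1))
    (hφK : MapsTo φ (ball 0 1) K) {W : Submodule ℂ E} (hW : ∀ z ∈ ball (0 : ℂ) 1, φ z - φ 0 ∈ W)
    (h0 : (0 : W) ∉ interior {X : W | φ 0 + (X : E) ∈ K}) :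
    ∃ W' < W, ∀ z ∈ ball (0 : ℂ) 1, φ z - φ 0 ∈ W' := by
  have hC : Convex ℝ {X : W | φ 0 + (X : E) ∈ K} :=
    (hK.translate_preimage_right (φ 0)).linear_preimage (W.subtype.restrictScalars ℝ)
  obtain ⟨f, hf0, hf⟩ :=
    hC.exists_forall_le_of_notMem_interior (by simpa using hφK (mem_ball_self one_pos)) h0
  obtain ⟨G, hG, -⟩ := exists_extension_norm_eq W (StrongDual.extendRCLike (𝕜 := ℂ) f)
  have hreG : ∀ X : W, (G X).re = f X := fun X => by
    rw [hG]; exact StrongDual.re_extendRCLike_apply (𝕜 := ℂ) f X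
  have hker : ∀ z ∈ ball (0 : ℂ) 1, G (φ z - φ 0) = 0 :=
    (G.differentiable.comp_differentiableOn (hφ.sub_const _)).eq_zero_of_re_nonpos isOpen_ball
      (convex_ball 0 1).isPreconnected (mem_ball_self one_pos) (by simp)
      fun z hz => by
        change (G (φ z - φ 0)).re ≤ 0
        rw [show φ z - φ 0 = ((⟨_, hW z hz⟩ : W) : E) from rfl, hreG]
        simpa using hf _ (by simpa using hφK hz)
  refine ⟨W ⊓ LinearMap.ker (G : E →ₗ[ℂ] ℂ), inf_lt_left.2 fun hle => hf0 ?_,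
    fun z hz => ⟨hW z hz, hker z hz⟩⟩
  ext X
  have : G X = 0 := hle X.2
  simpa [this] using (hreG X).symm

theorem eq_of_forall_zero_notMem_interior [FiniteDimensional ℂ E] {K : Set E}
    (hK : Convex ℝ K) {φ : ℂ → E} (hφ : DifferentiableOn ℂ φ (ball 0 1))
    (hφK : MapsTo φ (ball 0 1) K)
    (hslice : ∀ W : Submodule ℂ E, W ≠ ⊥ → (0 : W) ∉ interior {X : W | φ 0 + (X : E) ∈ K}) :
    ∀ z ∈ ball (0 : ℂ) 1, φ z = φ 0 := by
  suffices ∀ W : Submodule ℂ E, (∀ z ∈ ball (0 : ℂ) 1, φ z - φ 0 ∈ W) →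
      ∀ z ∈ ball (0 : ℂ) 1, φ z = φ 0 from
    this ⊤ fun _ _ => Submodule.mem_top
  intro W
  induction W using WellFoundedLT.induction with
  | _ W ih =>
  intro hW
  rcases eq_or_ne W ⊥ with rfl | hbot
  · intro z hz
    simpa [sub_eq_zero] using hW z hz
  obtain ⟨W', hlt, hW'⟩ :=
    exists_lt_forall_sub_mem_of_zero_notMem_interior hK hφ hφK hW (hslice W hbot)
  exact ih W' hlt hW'

theorem Convex.zero_notMem_interior_slice_closure {D : Set E} (hD : Convex ℝ D) {z₀ : E}
    (hz₀ : z₀ ∉ interior D)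
    (hL : ∀ X : E, (∃ ε > (0 : ℝ), ∀ l : ℂ, ‖l‖ ≤ ε → z₀ + l • X ∈ frontier D) → X = 0)
    {W : Submodule ℂ E} (hW : W ≠ ⊥) : (0 : W) ∉ interior {X : W | z₀ + (X : E) ∈ closure D} := by
  intro h0
  obtain ⟨X, hXW, hX0⟩ := W.exists_mem_ne_zero_of_ne_bot hW
  have hcont : Filter.Tendsto (fun l : ℂ => l • (⟨X, hXW⟩ : W)) (nhds 0) (nhds 0) := by
    simpa using (Filter.tendsto_id (x := nhds (0 : ℂ))).smul_const (⟨X, hXW⟩ : W)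
  obtain ⟨ε, hε, hball⟩ :=
    nhds_basis_closedBall.mem_iff.1 (hcont (mem_interior_iff_mem_nhds.1 h0))
  refine hX0 (hL X ⟨ε, hε, fun l hl => ⟨hball (mem_closedBall_zero_iff.2 hl), ?_⟩⟩)
  refine hD.add_notMem_interior_of_sub_mem_closure_s10 hz₀ ?_
  rw [sub_eq_add_neg, ← neg_smul]
  exact hball (by simpa using hl)

end

theorem stmt10_general {n : ℕ} (D : Set (EuclideanSpace ℂ (Fin n)))
    (hDc : Convex ℝ D)
    (z₀ : EuclideanSpace ℂ (Fin n)) (hz₀ : z₀ ∈ frontier D)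
    (hL : {X : EuclideanSpace ℂ (Fin n) |
      ∃ ε > (0 : ℝ), ∀ l : ℂ, ‖l‖ ≤ ε → z₀ + l • X ∈ frontier D} = {0})
    (φ : ℂ → EuclideanSpace ℂ (Fin n))
    (hφ : DifferentiableOn ℂ φ (ball (0 : ℂ) 1))
    (hφD : Set.MapsTo φ (ball (0 : ℂ) 1) (closure D))
    (hφ0 : φ 0 = z₀) :
    ∀ w ∈ ball (0 : ℂ) 1, φ w = z₀ := by
  subst hφ0
  have hL' := (eq_singleton_iff_unique_mem.1 hL).2
  exact eq_of_forall_zero_notMem_interior hDc.closure hφ hφD fun _ hW =>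
    hDc.zero_notMem_interior_slice_closure hz₀.2 hL' hW

/-- If `D` is a bounded convex domain, `z₀ ∈ ∂D` and `L(z₀) = {0}`, then every analytic
disc `φ : 𝔻 → closure D` with `φ(0) = z₀` is constant. -/
theorem stmt10 {n : ℕ} (D : Set (EuclideanSpace ℂ (Fin n)))
    (hDo : IsOpen D) (hDne : D.Nonempty) (hDc : Convex ℝ D)
    (hDb : Bornology.IsBounded D)
    (z₀ : EuclideanSpace ℂ (Fin n)) (hz₀ : z₀ ∈ frontier D)
    (hL : {X : EuclideanSpace ℂ (Fin n) |
      ∃ ε > (0 : ℝ), ∀ l : ℂ, ‖l‖ ≤ ε → z₀ + l • X ∈ frontier D} = {0})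
    (φ : ℂ → EuclideanSpace ℂ (Fin n))
    (hφ : DifferentiableOn ℂ φ (ball (0 : ℂ) 1))
    (hφD : Set.MapsTo φ (ball (0 : ℂ) 1) (closure D))
    (hφ0 : φ 0 = z₀) :
    ∀ w ∈ ball (0 : ℂ) 1, φ w = z₀ :=
  stmt10_general D hDc z₀ hz₀ hL φ hφ hφD hφ0
end

section
/- Let D ⊂ ℂⁿ be a bounded convex domain and z₀ ∈ ∂D a peak point for A⁰(D) (i.e. there exists f holomorphic on D, continuous on closure(D), with f(z₀) = 1 and |f(z)| < 1 for all z ∈ closure(D) \ {z₀}). Then L(z₀) = {0}. -/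
/-!
Pushing a complex disc `l ↦ z₀ + l • X` lying in `closure D` slightly towards an interior point
`w` gives discs inside `D`; by uniform continuity of `f` on compacta of `closure D`, the
restrictions of `f` to them converge locally uniformly, so `l ↦ f (z₀ + l • X)` is holomorphic.
If `X ≠ 0`, the peak condition makes the modulus of this function strictly maximal at the centre
`l = 0` of the disc, which the maximum modulus principle forbids.
-/

open Set Filter Metric Topology

theorem Convex.differentiableOn_comp_of_mapsTo_closure {E : Type*} [NormedAddCommGroup E]
    [NormedSpace ℂ E] {D : Set E} (hDo : IsOpen D)
    (hDc : Convex ℝ D) {f : E → ℂ} (hf : DifferentiableOn ℂ f D)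
    (hfc : ContinuousOn f (closure D)) {U : Set ℂ} (hU : IsOpen U) {p : ℂ → E}
    (hp : DifferentiableOn ℂ p U) (hpU : MapsTo p U (closure D)) :
    DifferentiableOn ℂ (f ∘ p) U := by
  rcases U.eq_empty_or_nonempty with rfl | ⟨l₀, hl₀⟩
  · exact differentiableOn_empty
  obtain ⟨w, hw⟩ : D.Nonempty := closure_nonempty_iff.mp ⟨p l₀, hpU hl₀⟩
  set F : ℝ → ℂ → ℂ := fun t l => f ((1 - t) • p l + t • w)
  have hF0 : F 0 = f ∘ p := by ext l; simp [F]
  have hFD : ∀ t ∈ Ioo (0 : ℝ) 1, MapsTo (fun l => (1 - t) • p l + t • w) U D := by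
    intro t ht l hl
    have hwi : w ∈ interior D := hDo.interior_eq.symm ▸ hw
    simpa only [hDo.interior_eq] using
      hDc.combo_closure_interior_mem_interior (hpU hl) hwi (by linarith [ht.2]) ht.1 (by ring)
  have hFdiff : ∀ t ∈ Ioo (0 : ℝ) 1, DifferentiableOn ℂ (F t) U := fun t ht =>
    hf.comp ((hp.const_smul (1 - t)).add_const (t • w)) (hFD t ht)
  have hFunif : ∀ K ⊆ U, IsCompact K → TendstoUniformlyOn F (F 0) (𝓝[Ioo 0 1] 0) K := by
    intro K hKU hK
    have hcont : ContinuousOn ↿F (Icc 0 1 ×ˢ K) := by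
      refine hfc.comp ?_ ?_
      · have hpK : ContinuousOn (fun x : ℝ × ℂ => p x.2) (Icc 0 1 ×ˢ K) :=
          (hp.continuousOn.mono hKU).comp continuousOn_snd fun x hx => hx.2
        exact ((continuousOn_const.sub continuousOn_fst).smul hpK).add
          (continuousOn_fst.smul continuousOn_const)
      · rintro ⟨t, l⟩ ⟨ht, hl⟩
        exact hDc.closure (hpU (hKU hl)) (subset_closure hw) (by linarith [ht.2]) ht.1 (by ring)
    have := ((isCompact_Icc.prod hK).uniformContinuousOn_of_continuous hcont).tendstoUniformlyOn
      (left_mem_Icc.mpr zero_le_one)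
    exact fun u hu => (this u hu).filter_mono (nhdsWithin_mono _ Ioo_subset_Icc_self)
  have := left_nhdsWithin_Ioo_neBot (zero_lt_one' ℝ)
  rw [← hF0]
  exact TendstoLocallyUniformlyOn.differentiableOn
    ((tendstoLocallyUniformlyOn_iff_forall_isCompact hU).mpr hFunif)
    (eventually_nhdsWithin_of_forall hFdiff) hU

theorem exists_ne_norm_le_of_differentiableOn_ball {F : Type*} [NormedAddCommGroup F]
    [NormedSpace ℂ F] {g : ℂ → F} {c : ℂ} {ε : ℝ} (hε : 0 < ε)
    (hg : DifferentiableOn ℂ g (ball c ε)) : ∃ l ∈ ball c ε, l ≠ c ∧ ‖g c‖ ≤ ‖g l‖ := by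
  by_contra! hlt
  have hmax : IsMaxOn (norm ∘ g) (ball c ε) c := isMaxOn_iff.mpr fun l hl => by
    rcases eq_or_ne l c with rfl | hlc
    exacts [le_rfl, (hlt l hl hlc).le]
  have hconst := Complex.norm_eqOn_of_isPreconnected_of_isMaxOn (convex_ball c ε).isPreconnected
    isOpen_ball hg (mem_ball_self hε) hmax
  set l : ℂ := c + ((ε / 2 : ℝ) : ℂ)
  have hl : l ∈ ball c ε := by
    rw [mem_ball, dist_eq_norm, add_sub_cancel_left, Complex.norm_real, Real.norm_of_nonneg]
    all_goals linarith
  have hlc : l ≠ c := by simp [l, hε.ne']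
  exact (hlt l hl hlc).ne (hconst hl)

theorem stmt11_general {n : ℕ} (D : Set (EuclideanSpace ℂ (Fin n)))
    (hDo : IsOpen D) (hDc : Convex ℝ D)
    (z₀ : EuclideanSpace ℂ (Fin n)) (hz₀ : z₀ ∈ frontier D)
    (f : EuclideanSpace ℂ (Fin n) → ℂ)
    (hf : DifferentiableOn ℂ f D) (hfc : ContinuousOn f (closure D))
    (hfz₀ : f z₀ = 1)
    (hpeak : ∀ z ∈ closure D, z ≠ z₀ → ‖f z‖ < 1) :
    {X : EuclideanSpace ℂ (Fin n) |
      ∃ ε > (0 : ℝ), ∀ l : ℂ, ‖l‖ ≤ ε → z₀ + l • X ∈ frontier D} = {0} := by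
  ext X
  simp only [mem_ofPred_eq, mem_singleton_iff]
  constructor
  · rintro ⟨ε, hε, hX⟩
    by_contra hX0
    set p : ℂ → EuclideanSpace ℂ (Fin n) := fun l => z₀ + l • X
    have hpD : MapsTo p (ball 0 ε) (closure D) := fun l hl =>
      frontier_subset_closure (hX l (mem_ball_zero_iff.mp hl).le)
    have hfp : DifferentiableOn ℂ (f ∘ p) (ball 0 ε) :=
      hDc.differentiableOn_comp_of_mapsTo_closure hDo hf hfc isOpen_ball
        ((differentiable_id.smul_const X).const_add z₀).differentiableOn hpD
    obtain ⟨l, hl, hl0, hle⟩ := exists_ne_norm_le_of_differentiableOn_ball hε hfp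
    have hpl : p l ≠ z₀ := by simpa [p] using ⟨hl0, hX0⟩
    have hlt := hpeak (p l) (hpD hl) hpl
    simp only [Function.comp_apply, p, zero_smul, add_zero, hfz₀, norm_one] at hle
    linarith
  · rintro rfl
    exact ⟨1, one_pos, fun l _ => by simpa using hz₀⟩

/-- If `z₀ ∈ ∂D` is a peak point for `A⁰(D)` of a bounded convex domain `D`,
then `L(z₀) = {0}`. -/
theorem stmt11 {n : ℕ} (D : Set (EuclideanSpace ℂ (Fin n)))
    (hDo : IsOpen D) (hDne : D.Nonempty) (hDc : Convex ℝ D)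
    (hDb : Bornology.IsBounded D)
    (z₀ : EuclideanSpace ℂ (Fin n)) (hz₀ : z₀ ∈ frontier D)
    (f : EuclideanSpace ℂ (Fin n) → ℂ)
    (hf : DifferentiableOn ℂ f D) (hfc : ContinuousOn f (closure D))
    (hfz₀ : f z₀ = 1)
    (hpeak : ∀ z ∈ closure D, z ≠ z₀ → ‖f z‖ < 1) :
    {X : EuclideanSpace ℂ (Fin n) |
      ∃ ε > (0 : ℝ), ∀ l : ℂ, ‖l‖ ≤ ε → z₀ + l • X ∈ frontier D} = {0} :=
  stmt11_general D hDo hDc z₀ hz₀ f hf hfc hfz₀ hpeak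
end
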